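/- For the spin coherent state |ℓ n⟩ = |n⟩^{⊗2ℓ} in the symmetric tensor power of ℂ², the expectation values and total variance satisfy ⟨ℓ n| L_i |ℓ n⟩ = ℏℓ n_i and Σ_i (⟨L_i²⟩ - ⟨L_i⟩²) = ℏ²ℓ, so the relative uncertainty Σ_i ΔL_i² / ⟨L²⟩ = 1/(ℓ+1) tends to 0 as ℓ → ∞. -/

import Mathlib

/-!
In the product state `|n⟩^{⊗2ℓ}` distinct sites are uncorrelated, so with `m_i = ⟨n|σ_i|n⟩` one
gets `⟨σ_i^{(p)} σ_i^{(q)}⟩ = m_i²` for `p ≠ q`, and `= 1` for `p = q` because `σ_i² = 1`.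
Summing over sites, `⟨L_i⟩ = ℏℓ m_i` and `⟨L_i²⟩ - ⟨L_i⟩² = (ℏ²ℓ/2)(1 - m_i²)`. The Bloch vector
`m` of a unit spinor is a unit vector, so the variances add up to `ℏ²ℓ` while `⟨L²⟩ = ℏ²ℓ(ℓ+1)`.
-/

open Complex Finset Matrix Filter

/-- The standard Pauli matrices `σ_x, σ_y, σ_z`. -/
noncomputable def pauli : Fin 3 → Matrix (Fin 2) (Fin 2) ℂ :=
  ![!![0, 1; 1, 0], !![0, -Complex.I; Complex.I, 0], !![1, 0; 0, -1]]

/-- `σ_i^{(p)}`: `σ_i` acting on the `p`-th factor of `(ℂ²)^{⊗2ℓ}`. -/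
noncomputable def pauliAt (ℓ : ℕ) (p : Fin (2 * ℓ)) (i : Fin 3) :
    Matrix (Fin (2 * ℓ) → Fin 2) (Fin (2 * ℓ) → Fin 2) ℂ :=
  fun f g => ∏ q : Fin (2 * ℓ),
    if q = p then pauli i (f q) (g q) else (if f q = g q then 1 else 0)

/-- The angular momentum operator `L_i = (ℏ/2) Σ_{p=1}^{2ℓ} σ_i^{(p)}`. -/
noncomputable def Lop (ℏ : ℝ) (ℓ : ℕ) (i : Fin 3) :
    Matrix (Fin (2 * ℓ) → Fin 2) (Fin (2 * ℓ) → Fin 2) ℂ :=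
  ((ℏ : ℂ) / 2) • ∑ p : Fin (2 * ℓ), pauliAt ℓ p i

/-- The product state `|n⟩^{⊗2ℓ}` in the standard tensor basis. -/
def tensorPowerState (ℓ : ℕ) (n : Fin 2 → ℂ) : (Fin (2 * ℓ) → Fin 2) → ℂ :=
  fun f => ∏ p : Fin (2 * ℓ), n (f p)

/-- The expectation value `⟨ℓ n| M |ℓ n⟩` of an operator `M` in `|n⟩^{⊗2ℓ}`. -/
noncomputable def expec (ℓ : ℕ) (n : Fin 2 → ℂ)
    (M : Matrix (Fin (2 * ℓ) → Fin 2) (Fin (2 * ℓ) → Fin 2) ℂ) : ℂ :=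
  ∑ f : Fin (2 * ℓ) → Fin 2,
    star (tensorPowerState ℓ n f) * (M.mulVec (tensorPowerState ℓ n) f)


namespace Matrix

variable {ι m R : Type*} [Fintype ι] [DecidableEq ι] [Fintype m] [CommSemiring R]

def kronPi (A : ι → Matrix m m R) : Matrix (ι → m) (ι → m) R :=
  fun f g => ∏ q, A q (f q) (g q)

theorem kronPi_mul (A B : ι → Matrix m m R) : kronPi A * kronPi B = kronPi (A * B) := by
  ext f g
  simp only [mul_apply, kronPi, ← prod_mul_distrib, Pi.mul_apply]
  exact (Fintype.prod_sum fun q b => A q (f q) b * B q b (g q)).symm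

theorem prod_dotProduct_kronPi_mulVec_prod (u w : ι → m → R) (A : ι → Matrix m m R) :
    (fun f => ∏ q, u q (f q)) ⬝ᵥ (kronPi A *ᵥ fun f => ∏ q, w q (f q))
      = ∏ q, u q ⬝ᵥ (A q *ᵥ w q) := by
  simp only [dotProduct, mulVec, kronPi, Fintype.prod_sum, Finset.mul_sum, ← prod_mul_distrib]

end Matrix

open ComplexConjugate

theorem pauli_mul_self (i : Fin 3) : pauli i * pauli i = 1 := by
  fin_cases i <;> ext a b <;> fin_cases a <;> fin_cases b <;>
    simp [pauli, mul_apply, Fin.sum_univ_two, one_apply]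

theorem sum_sq_star_dotProduct_pauli_mulVec (n : Fin 2 → ℂ) :
    ∑ i, (star n ⬝ᵥ (pauli i *ᵥ n)) ^ 2 = (star n ⬝ᵥ n) ^ 2 := by
  simp only [Fin.sum_univ_three, dotProduct, mulVec, Fin.sum_univ_two, Pi.star_apply]
  simp only [Fin.isValue, RCLike.star_def, pauli, cons_val_zero, of_apply, cons_val',
    cons_val_fin_one, zero_mul, cons_val_one, one_mul, zero_add, add_zero, neg_mul, mul_neg,
    Matrix.cons_val]
  linear_combination (conj (n 0) * n 1 - conj (n 1) * n 0) ^ 2 * I_sq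

theorem star_dotProduct_self_eq_one {ι : Type*} [Fintype ι] {v : ι → ℂ}
    (hv : ∑ i, ‖v i‖ ^ 2 = 1) : star v ⬝ᵥ v = 1 := by
  simp only [dotProduct, Pi.star_apply, star_def, conj_mul', ← ofReal_pow, ← ofReal_sum, hv,
    ofReal_one]

section Expectation

variable {ℓ : ℕ} {n : Fin 2 → ℂ}

theorem expec_eq_dotProduct (M : Matrix (Fin (2 * ℓ) → Fin 2) (Fin (2 * ℓ) → Fin 2) ℂ) :
    expec ℓ n M = star (tensorPowerState ℓ n) ⬝ᵥ (M *ᵥ tensorPowerState ℓ n) :=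
  rfl

theorem expec_sum {ι : Type*} (s : Finset ι)
    (M : ι → Matrix (Fin (2 * ℓ) → Fin 2) (Fin (2 * ℓ) → Fin 2) ℂ) :
    expec ℓ n (∑ k ∈ s, M k) = ∑ k ∈ s, expec ℓ n (M k) := by
  simp only [expec_eq_dotProduct, sum_mulVec, dotProduct_sum]

theorem expec_smul (c : ℂ) (M : Matrix (Fin (2 * ℓ) → Fin 2) (Fin (2 * ℓ) → Fin 2) ℂ) :
    expec ℓ n (c • M) = c * expec ℓ n M := by
  simp only [expec_eq_dotProduct, smul_mulVec, dotProduct_smul, smul_eq_mul]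

theorem expec_kronPi (A : Fin (2 * ℓ) → Matrix (Fin 2) (Fin 2) ℂ) :
    expec ℓ n (kronPi A) = ∏ q, star n ⬝ᵥ (A q *ᵥ n) := by
  have hstar : star (tensorPowerState ℓ n) = fun f => ∏ q, star n (f q) := by
    ext f; simp [tensorPowerState, star_prod]
  rw [expec_eq_dotProduct, hstar]
  exact prod_dotProduct_kronPi_mulVec_prod _ _ A

theorem pauliAt_eq_kronPi (p : Fin (2 * ℓ)) (i : Fin 3) :
    pauliAt ℓ p i = kronPi (Pi.mulSingle p (pauli i)) := by
  ext f g
  refine prod_congr rfl fun q _ => ?_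
  by_cases h : q = p
  · subst h; simp
  · simp [h, one_apply]

variable (hn : ∑ i : Fin 2, ‖n i‖ ^ 2 = 1)
include hn

theorem expec_kronPi_mulSingle (p : Fin (2 * ℓ)) (B : Matrix (Fin 2) (Fin 2) ℂ) :
    expec ℓ n (kronPi (Pi.mulSingle p B)) = star n ⬝ᵥ (B *ᵥ n) := by
  rw [expec_kronPi]
  simp_rw [Pi.apply_mulSingle (fun _ B => star n ⬝ᵥ (B *ᵥ n))
    (fun _ => by rw [one_mulVec, star_dotProduct_self_eq_one hn])]
  simp

theorem expec_kronPi_mulSingle_mul_mulSingle {p q : Fin (2 * ℓ)} (hpq : p ≠ q)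
    (B C : Matrix (Fin 2) (Fin 2) ℂ) :
    expec ℓ n (kronPi (Pi.mulSingle p B * Pi.mulSingle q C))
      = star n ⬝ᵥ (B *ᵥ n) * star n ⬝ᵥ (C *ᵥ n) := by
  rw [expec_kronPi, Fintype.prod_eq_mul p q hpq]
  · simp [hpq, hpq.symm]
  · rintro r ⟨hrp, hrq⟩
    simp [hrp, hrq, star_dotProduct_self_eq_one hn]

theorem expec_pauliAt (p : Fin (2 * ℓ)) (i : Fin 3) :
    expec ℓ n (pauliAt ℓ p i) = star n ⬝ᵥ (pauli i *ᵥ n) := by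
  rw [pauliAt_eq_kronPi, expec_kronPi_mulSingle hn]

theorem expec_pauliAt_mul_pauliAt (p q : Fin (2 * ℓ)) (i : Fin 3) :
    expec ℓ n (pauliAt ℓ p i * pauliAt ℓ q i)
      = if p = q then 1 else (star n ⬝ᵥ (pauli i *ᵥ n)) ^ 2 := by
  rw [pauliAt_eq_kronPi, pauliAt_eq_kronPi, kronPi_mul]
  split_ifs with hpq
  · rw [hpq, ← Pi.mulSingle_mul, pauli_mul_self, Pi.mulSingle_one, expec_kronPi]
    simp [star_dotProduct_self_eq_one hn]
  · rw [expec_kronPi_mulSingle_mul_mulSingle hn hpq, sq]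

theorem expec_Lop (ℏ : ℝ) (i : Fin 3) :
    expec ℓ n (Lop ℏ ℓ i) = ℏ * ℓ * (star n ⬝ᵥ (pauli i *ᵥ n)) := by
  simp only [Lop, expec_smul, expec_sum, expec_pauliAt hn, sum_const, card_univ,
    Fintype.card_fin, nsmul_eq_mul]
  push_cast
  ring

theorem expec_Lop_sq (ℏ : ℝ) (i : Fin 3) :
    expec ℓ n (Lop ℏ ℓ i ^ 2)
      = ℏ ^ 2 * ℓ / 2 * (1 + (2 * ℓ - 1) * (star n ⬝ᵥ (pauli i *ᵥ n)) ^ 2) := by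
  have hdiag (p : Fin (2 * ℓ)) :
      ∑ q, expec ℓ n (pauliAt ℓ p i * pauliAt ℓ q i)
        = 1 + (2 * ℓ - 1) * (star n ⬝ᵥ (pauli i *ᵥ n)) ^ 2 := by
    have hsplit (q : Fin (2 * ℓ)) : expec ℓ n (pauliAt ℓ p i * pauliAt ℓ q i)
        = (star n ⬝ᵥ (pauli i *ᵥ n)) ^ 2
          + if p = q then 1 - (star n ⬝ᵥ (pauli i *ᵥ n)) ^ 2 else 0 := by
      rw [expec_pauliAt_mul_pauliAt hn]; split_ifs <;> ring
    simp only [hsplit, sum_add_distrib, sum_ite_eq, mem_univ, if_true, sum_const, card_univ,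
      Fintype.card_fin, nsmul_eq_mul]
    push_cast
    ring
  simp only [sq, Lop, smul_mul_smul, sum_mul_sum, expec_smul, expec_sum, hdiag, sum_const,
    card_univ, Fintype.card_fin, nsmul_eq_mul]
  push_cast
  ring

theorem sum_sq_star_dotProduct_pauli_mulVec_eq_one :
    ∑ i, (star n ⬝ᵥ (pauli i *ᵥ n)) ^ 2 = 1 := by
  rw [sum_sq_star_dotProduct_pauli_mulVec, star_dotProduct_self_eq_one hn, one_pow]

theorem sum_expec_Lop_sq_sub_sq (ℏ : ℝ) :
    ∑ i, (expec ℓ n (Lop ℏ ℓ i ^ 2) - expec ℓ n (Lop ℏ ℓ i) ^ 2) = ℏ ^ 2 * ℓ := by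
  have hbloch := sum_sq_star_dotProduct_pauli_mulVec_eq_one hn
  simp only [expec_Lop hn, expec_Lop_sq hn, Fin.sum_univ_three] at hbloch ⊢
  linear_combination (-(ℏ : ℂ) ^ 2 * ℓ / 2) * hbloch

theorem sum_expec_Lop_sq (ℏ : ℝ) :
    ∑ i, expec ℓ n (Lop ℏ ℓ i ^ 2) = ℏ ^ 2 * ℓ * (ℓ + 1) := by
  have hbloch := sum_sq_star_dotProduct_pauli_mulVec_eq_one hn
  simp only [expec_Lop_sq hn, Fin.sum_univ_three] at hbloch ⊢
  linear_combination ((ℏ : ℂ) ^ 2 * ℓ * (2 * ℓ - 1) / 2) * hbloch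

end Expectation

/-- for the spin coherent state `|ℓ n⟩ = |n⟩^{⊗2ℓ}`,
`⟨L_i⟩ = ℏℓ n_i` (with `n_i = ⟨n|σ_i|n⟩`), the total variance is
`Σ_i (⟨L_i²⟩ - ⟨L_i⟩²) = ℏ²ℓ`, and the relative uncertainty
`Σ_i ΔL_i² / ⟨L²⟩ = 1/(ℓ+1) → 0` as `ℓ → ∞`. -/
theorem spin_coherent_expectation_and_uncertainty
    (ℏ : ℝ) (hℏ : 0 < ℏ) (ℓ : ℕ) (hℓ : 1 ≤ ℓ) (n : Fin 2 → ℂ)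
    (hn : ∑ i : Fin 2, ‖n i‖ ^ 2 = 1) :
    (∀ i : Fin 3, expec ℓ n (Lop ℏ ℓ i)
        = ((ℏ : ℂ) * ℓ) * ∑ a : Fin 2, star (n a) * ((pauli i).mulVec n a))
    ∧ (∑ i : Fin 3, (expec ℓ n (Lop ℏ ℓ i ^ 2) - (expec ℓ n (Lop ℏ ℓ i)) ^ 2))
        = (ℏ : ℂ) ^ 2 * ℓ
    ∧ (∑ i : Fin 3, (expec ℓ n (Lop ℏ ℓ i ^ 2) - (expec ℓ n (Lop ℏ ℓ i)) ^ 2))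
        / (∑ i : Fin 3, expec ℓ n (Lop ℏ ℓ i ^ 2)) = 1 / ((ℓ : ℂ) + 1)
    ∧ Tendsto (fun ℓ : ℕ => (1 : ℝ) / ((ℓ : ℝ) + 1)) atTop (nhds 0) := by
  refine ⟨expec_Lop hn ℏ, sum_expec_Lop_sq_sub_sq hn ℏ, ?_,
    tendsto_one_div_add_atTop_nhds_zero_nat⟩
  have hℏ' : (ℏ : ℂ) ≠ 0 := ofReal_ne_zero.mpr hℏ.ne'
  have hℓ' : (ℓ : ℂ) ≠ 0 := Nat.cast_ne_zero.mpr (by omega)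
  have hℓ1 : (ℓ : ℂ) + 1 ≠ 0 := by exact_mod_cast Nat.succ_ne_zero ℓ
  rw [sum_expec_Lop_sq_sub_sq hn, sum_expec_Lop_sq hn]
  field_simp
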